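/- Let Θ : [0,π] → [0,π] be an increasing homeomorphism (continuous, strictly monotone, Θ(0)=0, Θ(π)=π) that is super-additive (Θ(θ₁+θ₂) ≥ Θ(θ₁)+Θ(θ₂) whenever θ₁+θ₂ ≤ π) and symmetric in the sense Θ(π−θ) = π−Θ(θ), and suppose that for every continuous convex function F : [0,π] → ℝ one has ∫₀^π F(Θ(θ)) sin(θ) dθ ≤ ∫₀^π F(θ) sin(θ) dθ. Then Θ is the identity map. -/
import Mathlib


open Real MeasureTheory Set

theorem otal_lemma8 (Θ : ℝ → ℝ)
    (hmap : Set.MapsTo Θ (Set.Icc 0 π) (Set.Icc 0 π))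
    (hcont : ContinuousOn Θ (Set.Icc 0 π))
    (hmono : StrictMonoOn Θ (Set.Icc 0 π))
    (h0 : Θ 0 = 0) (hπ : Θ π = π)
    (hsuper : ∀ a b : ℝ, 0 ≤ a → 0 ≤ b → a + b ≤ π → Θ a + Θ b ≤ Θ (a + b))
    (hsym : ∀ θ ∈ Set.Icc (0:ℝ) π, Θ (π - θ) = π - Θ θ)
    (hint : ∀ F : ℝ → ℝ, ContinuousOn F (Set.Icc 0 π) → ConvexOn ℝ (Set.Icc 0 π) F →
      ∫ θ in (0:ℝ)..π, F (Θ θ) * Real.sin θ ≤ ∫ θ in (0:ℝ)..π, F θ * Real.sin θ) :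
    ∀ θ ∈ Set.Icc (0:ℝ) π, Θ θ = θ := by
  have hpi : (0:ℝ) < π := Real.pi_pos
  have hhalfmem : (π/2 : ℝ) ∈ Icc (0:ℝ) π := ⟨by linarith, by linarith⟩
  have hhalf : Θ (π/2) = π/2 := by
    have h := hsym (π/2) hhalfmem
    rw [show π - π/2 = π/2 by ring] at h
    linarith
  have hsub : Icc (0:ℝ) (π/2) ⊆ Icc (0:ℝ) π := Icc_subset_Icc le_rfl (by linarith)
  set f : ℝ → ℝ := fun x => Real.sin (Θ x) * Real.sin x with hf_def
  have hfc : ContinuousOn f (Icc 0 π) :=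
    (Real.continuous_sin.comp_continuousOn hcont).mul Real.continuous_sin.continuousOn
  have hfint : IntervalIntegrable f volume 0 π := by
    apply ContinuousOn.intervalIntegrable
    rwa [uIcc_of_le hpi.le]
  have hfint2 : IntervalIntegrable f volume 0 (π/2) := by
    apply ContinuousOn.intervalIntegrable
    rw [uIcc_of_le (by linarith : (0:ℝ) ≤ π/2)]
    exact hfc.mono hsub
  have hfint3 : IntervalIntegrable f volume (π/2) π := by
    apply ContinuousOn.intervalIntegrable
    rw [uIcc_of_le (by linarith : π/2 ≤ π)]
    exact hfc.mono (Icc_subset_Icc (by linarith) le_rfl)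
  -- Step A : π/2 ≤ ∫ f over [0,π]
  have hA : π/2 ≤ ∫ θ in (0:ℝ)..π, f θ := by
    have hconv : ConvexOn ℝ (Icc 0 π) (fun x => -Real.sin x) :=
      strictConcaveOn_sin_Icc.concaveOn.neg
    have hcF : ContinuousOn (fun x => -Real.sin x) (Icc (0:ℝ) π) :=
      Real.continuous_sin.neg.continuousOn
    have h := hint (fun x => -Real.sin x) hcF hconv
    have h1 : (∫ θ in (0:ℝ)..π, -Real.sin (Θ θ) * Real.sin θ)
        = - ∫ θ in (0:ℝ)..π, f θ := by
      rw [← intervalIntegral.integral_neg]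
      congr 1 with θ
      simp [hf_def]
    have h2 : (∫ θ in (0:ℝ)..π, -Real.sin θ * Real.sin θ) = -(π/2) := by
      rw [show (fun θ => -Real.sin θ * Real.sin θ) = fun θ => -(Real.sin θ ^ 2) by
        funext θ; rw [sq]; ring]
      rw [intervalIntegral.integral_neg, integral_sin_sq]
      simp
    rw [h1, h2] at h
    linarith
  -- Step B : ∫₀^π f = 2 ∫₀^{π/2} f
  have hB : (∫ θ in (0:ℝ)..π, f θ) = 2 * ∫ θ in (0:ℝ)..(π/2), f θ := by
    have h1 : (∫ x in (π/2:ℝ)..π, f x) = ∫ x in (0:ℝ)..(π/2), f x := by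
      have hc := intervalIntegral.integral_comp_sub_left (a := (0:ℝ)) (b := π/2) f π
      rw [show π - π/2 = π/2 by ring, sub_zero] at hc
      rw [← hc]
      refine intervalIntegral.integral_congr fun x hx => ?_
      rw [uIcc_of_le (by linarith : (0:ℝ) ≤ π/2)] at hx
      have hxP : x ∈ Icc (0:ℝ) π := hsub hx
      simp only [hf_def]
      rw [hsym x hxP, Real.sin_pi_sub, Real.sin_pi_sub]
    have h2 := intervalIntegral.integral_add_adjacent_intervals hfint2 hfint3
    rw [h1] at h2
    linarith
  -- Step C : the reflected integral
  have hC : (∫ θ in (0:ℝ)..(π/2), Real.sin (Θ (π/2 - θ)) * Real.cos θ)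
      = ∫ θ in (0:ℝ)..(π/2), f θ := by
    have hc := intervalIntegral.integral_comp_sub_left (a := (0:ℝ)) (b := π/2) f (π/2)
    rw [show π/2 - π/2 = (0:ℝ) by ring, sub_zero] at hc
    rw [← hc]
    refine intervalIntegral.integral_congr fun x hx => ?_
    simp only [hf_def]
    rw [Real.sin_pi_div_two_sub]
  -- membership facts on [0, π/2]
  have hmem : ∀ θ ∈ Icc (0:ℝ) (π/2), Θ θ ∈ Icc (0:ℝ) (π/2) := by
    intro θ hθ
    have hθP : θ ∈ Icc (0:ℝ) π := hsub hθ
    refine ⟨(hmap hθP).1, ?_⟩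
    have := hmono.monotoneOn hθP hhalfmem hθ.2
    rwa [hhalf] at this
  have hrefl : ∀ θ ∈ Icc (0:ℝ) (π/2), (π/2 - θ) ∈ Icc (0:ℝ) (π/2) := by
    intro θ hθ
    exact ⟨by linarith [hθ.2], by linarith [hθ.1]⟩
  have hsum : ∀ θ ∈ Icc (0:ℝ) (π/2), Θ θ + Θ (π/2 - θ) ≤ π/2 := by
    intro θ hθ
    have h := hsuper θ (π/2 - θ) hθ.1 (by linarith [hθ.2]) (by linarith)
    rw [show θ + (π/2 - θ) = π/2 by ring, hhalf] at h
    exact h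
  -- Step D : pointwise bound
  have hD : ∀ θ ∈ Icc (0:ℝ) (π/2),
      f θ + Real.sin (Θ (π/2 - θ)) * Real.cos θ ≤ Real.cos (Θ θ - θ) := by
    intro θ hθ
    have ha := hmem θ hθ
    have hb := hmem _ (hrefl θ hθ)
    have hab := hsum θ hθ
    have hsinb : Real.sin (Θ (π/2 - θ)) ≤ Real.cos (Θ θ) := by
      rw [← Real.sin_pi_div_two_sub]
      exact Real.sin_le_sin_of_le_of_le_pi_div_two (by linarith [hb.1])
        (by linarith [ha.1]) (by linarith)
    have hcosθ : (0:ℝ) ≤ Real.cos θ :=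
      Real.cos_nonneg_of_mem_Icc ⟨by linarith [hθ.1], hθ.2⟩
    have h1 : Real.sin (Θ (π/2 - θ)) * Real.cos θ ≤ Real.cos (Θ θ) * Real.cos θ :=
      mul_le_mul_of_nonneg_right hsinb hcosθ
    have h2 : Real.cos (Θ θ - θ) = Real.cos (Θ θ) * Real.cos θ
        + Real.sin (Θ θ) * Real.sin θ := Real.cos_sub _ _
    simp only [hf_def]
    linarith
  -- identity on [0, π/2]
  have hid2 : ∀ θ ∈ Icc (0:ℝ) (π/2), Θ θ = θ := by
    by_contra hcon
    push_neg at hcon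
    obtain ⟨θ₀, hθ₀, hne⟩ := hcon
    have hθ₀0 : θ₀ ≠ 0 := fun h => hne (by rw [h, h0])
    have hθ₀h : θ₀ ≠ π/2 := fun h => hne (by rw [h, hhalf])
    have hθ₀oo : θ₀ ∈ Ioo (0:ℝ) (π/2) :=
      ⟨lt_of_le_of_ne hθ₀.1 (Ne.symm hθ₀0), lt_of_le_of_ne hθ₀.2 hθ₀h⟩
    set g : ℝ → ℝ := fun θ => 1 - (f θ + Real.sin (Θ (π/2 - θ)) * Real.cos θ) with hg_def
    have hcomp : ContinuousOn (fun θ => Real.sin (Θ (π/2 - θ)) * Real.cos θ)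
        (Icc (0:ℝ) (π/2)) := by
      apply ContinuousOn.mul
      · apply Real.continuous_sin.comp_continuousOn
        apply ContinuousOn.comp (hcont.mono hsub)
          (continuousOn_const.sub continuousOn_id)
        intro x hx
        exact hrefl x hx
      · exact Real.continuous_cos.continuousOn
    have hgc : ContinuousOn g (Icc (0:ℝ) (π/2)) :=
      continuousOn_const.sub ((hfc.mono hsub).add hcomp)
    have hgnn : ∀ θ ∈ Icc (0:ℝ) (π/2), 0 ≤ g θ := by
      intro θ hθ
      have h1 := hD θ hθ
      have h2 := Real.cos_le_one (Θ θ - θ)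
      simp only [hg_def]
      linarith
    have hint_h : IntervalIntegrable (fun θ => Real.sin (Θ (π/2 - θ)) * Real.cos θ)
        volume 0 (π/2) := by
      apply ContinuousOn.intervalIntegrable
      rw [uIcc_of_le (by linarith : (0:ℝ) ≤ π/2)]
      exact hcomp
    have hgint : IntervalIntegrable g volume 0 (π/2) := by
      apply ContinuousOn.intervalIntegrable
      rw [uIcc_of_le (by linarith : (0:ℝ) ≤ π/2)]
      exact hgc
    have hgval : (∫ θ in (0:ℝ)..(π/2), g θ) = π/2 - ∫ θ in (0:ℝ)..π, f θ := by
      have e1 : (∫ θ in (0:ℝ)..(π/2), g θ)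
          = (∫ _θ in (0:ℝ)..(π/2), (1:ℝ))
            - ∫ θ in (0:ℝ)..(π/2), (f θ + Real.sin (Θ (π/2 - θ)) * Real.cos θ) := by
        rw [← intervalIntegral.integral_sub intervalIntegrable_const (hfint2.add hint_h)]
      rw [e1, intervalIntegral.integral_add hfint2 hint_h, hC,
        intervalIntegral.integral_const, hB]
      simp
      ring
    have hgle : (∫ θ in (0:ℝ)..(π/2), g θ) ≤ 0 := by rw [hgval]; linarith
    -- strict positivity at θ₀
    have hgpos0 : 0 < g θ₀ := by
      have hD0 := hD θ₀ hθ₀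
      have ha := hmem θ₀ hθ₀
      have hlt : Real.cos (Θ θ₀ - θ₀) < 1 := by
        rcases lt_or_ge (Real.cos (Θ θ₀ - θ₀)) 1 with h | h
        · exact h
        · exfalso
          have heq : Real.cos (Θ θ₀ - θ₀) = 1 := le_antisymm (Real.cos_le_one _) h
          have hz := (Real.cos_eq_one_iff_of_lt_of_lt
            (by linarith [ha.1, ha.2, hθ₀.1, hθ₀.2] : -(2*π) < Θ θ₀ - θ₀)
            (by linarith [ha.1, ha.2, hθ₀.1, hθ₀.2] : Θ θ₀ - θ₀ < 2*π)).1 heq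
          exact hne (by linarith)
      simp only [hg_def]
      linarith
    have hca : ContinuousAt g θ₀ :=
      hgc.continuousAt (Icc_mem_nhds hθ₀oo.1 hθ₀oo.2)
    have hnb : g ⁻¹' (Ioi (g θ₀ / 2)) ∈ nhds θ₀ := hca (Ioi_mem_nhds (half_lt_self hgpos0))
    obtain ⟨δ, hδpos, hδ⟩ := Metric.mem_nhds_iff.1 hnb
    set δ' : ℝ := min (δ/2) (min θ₀ (π/2 - θ₀)) with hδ'def
    have hδ'pos : 0 < δ' :=
      lt_min (by linarith) (lt_min hθ₀oo.1 (by linarith [hθ₀oo.2]))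
    set l : ℝ := θ₀ - δ' with hl_def
    set u : ℝ := θ₀ + δ' with hu_def
    have hδ'θ : δ' ≤ θ₀ := le_trans (min_le_right _ _) (min_le_left _ _)
    have hδ'π : δ' ≤ π/2 - θ₀ := le_trans (min_le_right _ _) (min_le_right _ _)
    have hδ'δ : δ' ≤ δ/2 := min_le_left _ _
    have hl0 : 0 ≤ l := by simp only [hl_def]; linarith
    have hu2 : u ≤ π/2 := by simp only [hu_def]; linarith
    have hlu : l < u := by simp only [hl_def, hu_def]; linarith
    have hball : ∀ x ∈ Icc l u, g θ₀ / 2 < g x := by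
      intro x hx
      have hx1 := hx.1
      have hx2 := hx.2
      have : x ∈ Metric.ball θ₀ δ := by
        rw [Metric.mem_ball, Real.dist_eq, abs_sub_lt_iff]
        constructor
        · simp only [hu_def] at hx2; linarith
        · simp only [hl_def] at hx1; linarith
      exact hδ this
    have hi1 : IntervalIntegrable g volume 0 l := by
      apply hgint.mono_set
      rw [uIcc_of_le hl0, uIcc_of_le (by linarith : (0:ℝ) ≤ π/2)]
      exact Icc_subset_Icc le_rfl (by linarith)
    have hi2 : IntervalIntegrable g volume l u := by
      apply hgint.mono_set
      rw [uIcc_of_le hlu.le, uIcc_of_le (by linarith : (0:ℝ) ≤ π/2)]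
      exact Icc_subset_Icc hl0 hu2
    have hi3 : IntervalIntegrable g volume u (π/2) := by
      apply hgint.mono_set
      rw [uIcc_of_le hu2, uIcc_of_le (by linarith : (0:ℝ) ≤ π/2)]
      exact Icc_subset_Icc (by linarith) le_rfl
    have hsplit1 := intervalIntegral.integral_add_adjacent_intervals hi1 hi2
    have hsplit2 := intervalIntegral.integral_add_adjacent_intervals (hi1.trans hi2) hi3
    have hn1 : 0 ≤ ∫ θ in (0:ℝ)..l, g θ :=
      intervalIntegral.integral_nonneg hl0
        (fun x hx => hgnn x ⟨hx.1, by linarith [hx.2]⟩)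
    have hn3 : 0 ≤ ∫ θ in u..(π/2), g θ :=
      intervalIntegral.integral_nonneg hu2
        (fun x hx => hgnn x ⟨by linarith [hx.1], hx.2⟩)
    have hmid : (u - l) * (g θ₀ / 2) ≤ ∫ θ in l..u, g θ := by
      have hconst : (∫ _θ in l..u, (g θ₀ / 2)) = (u - l) * (g θ₀ / 2) := by
        rw [intervalIntegral.integral_const, smul_eq_mul]
      rw [← hconst]
      exact intervalIntegral.integral_mono_on hlu.le intervalIntegrable_const hi2
        (fun x hx => (hball x hx).le)
    have hposmid : 0 < (u - l) * (g θ₀ / 2) := by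
      exact mul_pos (by linarith) (half_pos hgpos0)
    have : 0 < ∫ θ in (0:ℝ)..(π/2), g θ := by
      rw [← hsplit2, ← hsplit1]
      linarith
    linarith
  intro θ hθ
  rcases le_or_gt θ (π/2) with h | h
  · exact hid2 θ ⟨hθ.1, h⟩
  · have hmem' : (π - θ) ∈ Icc (0:ℝ) (π/2) := ⟨by linarith [hθ.2], by linarith⟩
    have h1 := hsym (π - θ) (hsub hmem')
    rw [show π - (π - θ) = θ by ring, hid2 _ hmem'] at h1
    linarith
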